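/- arXiv:2508.05401 — 5 statements merged into one kernel-verified Lean document; each statement's English description precedes it below -/
import Mathlib

section
/- Let n ∈ {2,3}, ω > 0, μ > 0, λ ∈ ℝ, and set κ_s = ω/√μ. Let d, d⊥ ∈ ℝⁿ be unit vectors with d·d⊥ = 0, and let τ > κ_s. Define ξ = τ d + i √(κ_s² + τ²) d⊥ ∈ ℂⁿ and η = −i √(1 + κ_s²/τ²) d + d⊥ ∈ ℂⁿ, and let u₀ : ℝⁿ → ℂⁿ be the complex geometric optics solution u₀(x) = η e^{ξ·x}. Then ℒu₀ + ω² u₀ = 0 at every point of ℝⁿ. -/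
open scoped BigOperators NNReal ENNReal
open MeasureTheory Metric Set

noncomputable section

abbrev Euc (n : ℕ) := EuclideanSpace ℝ (Fin n)
abbrev EucC (n : ℕ) := EuclideanSpace ℂ (Fin n)

/-- Bundle a plain function into `EuclideanSpace`. -/
def toEuc {n : ℕ} (f : Fin n → ℝ) : Euc n := (WithLp.equiv 2 (Fin n → ℝ)).symm f

/-- Partial derivative `∂ⱼ f` of a scalar-valued function. -/
def pd {n : ℕ} (j : Fin n) (f : Euc n → ℂ) (x : Euc n) : ℂ :=
  fderiv ℝ f x (EuclideanSpace.single j 1)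

/-- The Lamé operator `(ℒu)ᵢ = μ Σⱼ ∂ⱼ∂ⱼuᵢ + (λ+μ) ∂ᵢ(Σⱼ ∂ⱼuⱼ)`. -/
def lame {n : ℕ} (lam mu : ℝ) (u : Euc n → EucC n) (x : Euc n) (i : Fin n) : ℂ :=
  (mu : ℂ) * ∑ j, pd j (fun y => pd j (fun z => u z i) y) x
    + ((lam : ℂ) + (mu : ℂ)) * pd i (fun y => ∑ j, pd j (fun z => u z j) y) x

/-- The set of Hölder quotients (componentwise) of a vector-valued function. -/
def holderSet {n m : ℕ} (δ : ℝ) (S : Set (Euc n)) (φ : Euc n → EucC m) : Set ℝ :=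
  {r | ∃ i : Fin m, ∃ x ∈ S, ∃ y ∈ S, x ≠ y ∧ r = ‖φ x i - φ y i‖ / ‖x - y‖ ^ δ}

/-- Hölder seminorm `[φ]_{δ,S} = maxᵢ sup_{x≠y∈S} |φᵢ(x)−φᵢ(y)|/|x−y|^δ`. -/
def holderSemi {n m : ℕ} (δ : ℝ) (S : Set (Euc n)) (φ : Euc n → EucC m) : ℝ :=
  sSup (insert 0 (holderSet δ S φ))

/-- Sup norm `‖φ‖_{L^∞(S)} = sup_S |φ|`. -/
def supNorm {n m : ℕ} (S : Set (Euc n)) (φ : Euc n → EucC m) : ℝ :=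
  sSup (insert 0 ((fun x => ‖φ x‖) '' S))

/-- L² norm on a set. -/
def l2norm {n m : ℕ} (S : Set (Euc n)) (f : Euc n → EucC m) : ℝ :=
  Real.sqrt (∫ x in S, ‖f x‖ ^ 2)

/-- H¹ norm on a set. -/
def h1norm {n m : ℕ} (S : Set (Euc n)) (f : Euc n → EucC m) : ℝ :=
  Real.sqrt (∫ x in S, (‖f x‖ ^ 2 + ‖fderiv ℝ f x‖ ^ 2))

/-- Hölder norm `‖φ‖_{C^α(S)}`. -/
def cNorm {n m : ℕ} (α : ℝ) (S : Set (Euc n)) (φ : Euc n → EucC m) : ℝ :=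
  supNorm S φ + holderSemi α S φ

/-- Frequency-scaled Hölder norm `‖φ‖_{C̃^δ(S)} = ‖φ‖_∞ + ω^{−δ}[φ]_{δ,S}`. -/
def ctNorm {n m : ℕ} (ω δ : ℝ) (S : Set (Euc n)) (φ : Euc n → EucC m) : ℝ :=
  supNorm S φ + ω ^ (-δ) * holderSemi δ S φ

/-- scalar versions -/
def holderSetS {n : ℕ} (δ : ℝ) (S : Set (Euc n)) (φ : Euc n → ℂ) : Set ℝ :=
  {r | ∃ x ∈ S, ∃ y ∈ S, x ≠ y ∧ r = ‖φ x - φ y‖ / ‖x - y‖ ^ δ}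

def holderSemiS {n : ℕ} (δ : ℝ) (S : Set (Euc n)) (φ : Euc n → ℂ) : ℝ :=
  sSup (insert 0 (holderSetS δ S φ))

def supNormS {n : ℕ} (S : Set (Euc n)) (φ : Euc n → ℂ) : ℝ :=
  sSup (insert 0 ((fun x => ‖φ x‖) '' S))

def cNormS {n : ℕ} (α : ℝ) (S : Set (Euc n)) (φ : Euc n → ℂ) : ℝ :=
  supNormS S φ + holderSemiS α S φ

def ctNormS {n : ℕ} (ω δ : ℝ) (S : Set (Euc n)) (φ : Euc n → ℂ) : ℝ :=
  supNormS S φ + ω ^ (-δ) * holderSemiS δ S φ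

def h1normS {n : ℕ} (S : Set (Euc n)) (f : Euc n → ℂ) : ℝ :=
  Real.sqrt (∫ x in S, (‖f x‖ ^ 2 + ‖fderiv ℝ f x‖ ^ 2))

/-- A bounded Lipschitz domain: open, bounded, nonempty, and near every boundary
point the set is the supergraph of a Lipschitz function in a suitable direction. -/
def IsLipschitzDomain {E : Type*} [NormedAddCommGroup E] [InnerProductSpace ℝ E]
    (Ω : Set E) : Prop :=
  IsOpen Ω ∧ Bornology.IsBounded Ω ∧ Ω.Nonempty ∧
  ∀ x ∈ frontier Ω, ∃ (v : E) (r : ℝ) (L : ℝ≥0) (f : E → ℝ),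
    ‖v‖ = 1 ∧ 0 < r ∧ LipschitzWith L f ∧
    ∀ y ∈ Metric.ball x r,
      (y ∈ Ω ↔ f (y - (inner ℝ y v : ℝ) • v) < (inner ℝ y v : ℝ))

/-- last coordinate index -/
def lastC (n : ℕ) [NeZero n] : Fin n :=
  ⟨n - 1, Nat.sub_lt (Nat.pos_of_ne_zero (NeZero.ne n)) one_pos⟩

/-- squared Euclidean norm of the tangential part `x′` -/
def sqnorm' {n : ℕ} [NeZero n] (x : Euc n) : ℝ :=
  ∑ j ∈ Finset.univ.erase (lastC n), x j ^ 2

/-- drop the last coordinate -/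
def projLast {n : ℕ} (x : Euc n) : Euc (n - 1) :=
  toEuc fun j : Fin (n - 1) => x ⟨j.1, lt_of_lt_of_le j.2 (Nat.sub_le n 1)⟩

/-- put back a last coordinate -/
def stack {n : ℕ} (w : Euc (n - 1)) (t : ℝ) : Euc n :=
  toEuc fun i : Fin n => if h : i.1 < n - 1 then w ⟨i.1, h⟩ else t

/-- Admissible `K`-curvature point with parameters `K, L, M, ς`. -/
def AdmissibleKPoint {n : ℕ} [NeZero n] (Ω : Set (Euc n)) (q : Euc n)
    (K L M ς : ℝ) : Prop :=
  1 ≤ M ∧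
  ∃ T : Euc n ≃ᵃⁱ[ℝ] Euc n, T q = 0 ∧
  ∃ γ : Euc (n - 1) → ℝ, ContDiff ℝ 3 γ ∧
    (∀ w : Euc (n - 1), ‖w‖ < Real.sqrt M / K → 0 ≤ γ w) ∧
    (∀ x : Euc n, ‖projLast x‖ < Real.sqrt M / K → -(1 / K) < x (lastC n) →
        x (lastC n) < 1 / K → (x ∈ T '' Ω ↔ γ (projLast x) < x (lastC n))) ∧
    (∃ c : ℝ, ∀ w : Euc (n - 1), ‖w‖ < Real.sqrt M / K →
        |γ w - K * ‖w‖ ^ 2| ≤ c * ‖w‖ ^ 3) ∧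
    (∃ Km Kp : ℝ, 0 < Km ∧ Km ≤ K ∧ K ≤ Kp ∧
        (∀ w : Euc (n - 1), ‖w‖ < Real.sqrt M / K →
          Km * ‖w‖ ^ 2 ≤ γ w ∧ γ w ≤ Kp * ‖w‖ ^ 2) ∧
        M⁻¹ ≤ Km / K ∧ Km / K ≤ M ∧ M⁻¹ ≤ Kp / K ∧ Kp / K ≤ M ∧
        Kp - Km ≤ L * K ^ (1 - ς)) ∧
    IsLipschitzDomain {w : Euc (n - 1) | stack w (1 / K) ∈
      closure {x : Euc n | ‖projLast x‖ < Real.sqrt M / K ∧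
        -(1 / K) < x (lastC n) ∧ x (lastC n) < 1 / K ∧ x ∈ T '' Ω}}
/-!
`u₀ = η e^{ξ·x}` is a plane wave, on which `ℒ` acts as multiplication by its symbol:
`ℒu₀ = (μ (ξ·ξ) η + (λ+μ) (ξ·η) ξ) e^{ξ·x}`, with the bilinear (not Hermitian) product `ξ·η`.
As `d, d⊥` are orthonormal, `ξ·ξ = τ² − (κ_s² + τ²) = −κ_s²`, and, since `τ > κ_s > 0`,
`ξ·η = i (√(κ_s² + τ²) − τ √(1 + κ_s²/τ²)) = 0`. Hence `ℒu₀ = −μ κ_s² u₀ = −ω² u₀`.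
-/

section PlaneWave

variable {n : ℕ}

theorem pd_const_mul_exp_sum (ξ : Fin n → ℂ) (c : ℂ) (j : Fin n) :
    pd j (fun z : Euc n => c * Complex.exp (∑ k, ξ k * (z k : ℂ)))
      = fun x => c * ξ j * Complex.exp (∑ k, ξ k * (x k : ℂ)) := by
  funext x
  let L : Euc n →L[ℝ] ℂ := ∑ k, ξ k • Complex.ofRealCLM.comp (EuclideanSpace.proj k)
  have hL : ∀ z : Euc n, L z = ∑ k, ξ k * (z k : ℂ) := fun z => by simp [L]
  have hLj : L (EuclideanSpace.single j 1) = ξ j := by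
    simp [hL, PiLp.single_apply, apply_ite Complex.ofReal]
  have hderiv : HasFDerivAt (fun z => c * Complex.exp (L z)) (c • Complex.exp (L x) • L) x :=
    L.hasFDerivAt.cexp.const_mul c
  simp only [← hL]
  rw [pd, hderiv.fderiv]
  simp only [smul_apply, hLj, smul_eq_mul]
  ring

theorem lame_of_planeWave (lam mu : ℝ) (ξ η : Fin n → ℂ) (u : Euc n → EucC n)
    (hu : ∀ x i, u x i = η i * Complex.exp (∑ j, ξ j * (x j : ℂ))) (x : Euc n) (i : Fin n) :
    lame lam mu u x i = (mu * (ξ ⬝ᵥ ξ) * η i + (lam + mu) * (η ⬝ᵥ ξ) * ξ i)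
      * Complex.exp (∑ j, ξ j * (x j : ℂ)) := by
  have hcomp : ∀ i, (fun z => u z i) = fun z => η i * Complex.exp (∑ j, ξ j * (z j : ℂ)) :=
    fun i => funext fun z => hu z i
  have hdiv : (fun y => ∑ j, pd j (fun z => u z j) y)
      = fun y => (η ⬝ᵥ ξ) * Complex.exp (∑ j, ξ j * (y j : ℂ)) := by
    simp only [hcomp, pd_const_mul_exp_sum, dotProduct, Finset.sum_mul]
  rw [lame, hdiv, pd_const_mul_exp_sum]
  simp only [hcomp, pd_const_mul_exp_sum]
  have hlaplacian : ∑ j, η i * ξ j * ξ j = η i * (ξ ⬝ᵥ ξ) := by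
    simp only [dotProduct, Finset.mul_sum, mul_assoc]
  rw [← Finset.sum_mul, hlaplacian]
  ring

end PlaneWave

section Orthonormal

variable {n : ℕ}

theorem ofReal_dotProduct_ofReal (v w : Euc n) :
    (fun j => (v j : ℂ)) ⬝ᵥ (fun j => (w j : ℂ)) = ((inner ℝ v w : ℝ) : ℂ) := by
  simp [dotProduct, PiLp.inner_apply, mul_comm]

theorem dotProduct_of_orthonormal {v w : Euc n} (hv : ‖v‖ = 1) (hw : ‖w‖ = 1)
    (hvw : (inner ℝ v w : ℝ) = 0) (a b c e : ℂ) :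
    (a • (fun j => (v j : ℂ)) + b • (fun j => (w j : ℂ)))
        ⬝ᵥ (c • (fun j => (v j : ℂ)) + e • (fun j => (w j : ℂ))) = a * c + b * e := by
  simp only [add_dotProduct, dotProduct_add, smul_dotProduct, dotProduct_smul,
    ofReal_dotProduct_ofReal, real_inner_self_eq_norm_sq, real_inner_comm v w, hv, hw, hvw]
  simp only [one_pow, Complex.ofReal_one, Complex.ofReal_zero, smul_eq_mul]
  ring

end Orthonormal

theorem mul_sqrt_one_add_div_sq {κ τ : ℝ} (hτ : 0 < τ) :
    τ * Real.sqrt (1 + κ ^ 2 / τ ^ 2) = Real.sqrt (κ ^ 2 + τ ^ 2) := by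
  rw [← Real.sqrt_sq hτ.le, ← Real.sqrt_mul (sq_nonneg τ), Real.sqrt_sq hτ.le]
  congr 1
  field_simp
  ring

theorem cgo_solution_lame_general
    (n : ℕ) (ω lam mu τ : ℝ)
    (hω : 0 < ω) (hmu : 0 < mu)
    (d dp : Euc n) (hd : ‖d‖ = 1) (hdp : ‖dp‖ = 1)
    (horth : (inner ℝ d dp : ℝ) = 0)
    (hτ : ω / Real.sqrt mu < τ)
    (ξ η : Fin n → ℂ)
    (hξ : ∀ j, ξ j = (τ : ℂ) * (d j : ℂ) +
        Complex.I * (Real.sqrt ((ω / Real.sqrt mu) ^ 2 + τ ^ 2) : ℂ) * (dp j : ℂ))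
    (hη : ∀ j, η j = -Complex.I * (Real.sqrt (1 + (ω / Real.sqrt mu) ^ 2 / τ ^ 2) : ℂ) *
        (d j : ℂ) + (dp j : ℂ))
    (u₀ : Euc n → EucC n)
    (hu₀ : ∀ x i, u₀ x i = η i * Complex.exp (∑ j, ξ j * (x j : ℂ))) :
    ∀ x i, lame lam mu u₀ x i + (ω : ℂ) ^ 2 * u₀ x i = 0 := by
  set κ := ω / Real.sqrt mu
  have hτpos : 0 < τ := (div_pos hω (Real.sqrt_pos.mpr hmu)).trans hτ
  have hξ' : ξ = (τ : ℂ) • (fun j => (d j : ℂ))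
      + (Complex.I * Real.sqrt (κ ^ 2 + τ ^ 2)) • (fun j => (dp j : ℂ)) := by
    funext j; simp [hξ, mul_assoc]
  have hη' : η = (-Complex.I * Real.sqrt (1 + κ ^ 2 / τ ^ 2)) • (fun j => (d j : ℂ))
      + (1 : ℂ) • (fun j => (dp j : ℂ)) := by
    funext j; simp [hη, mul_assoc]
  have hξξ : ξ ⬝ᵥ ξ = -(κ : ℂ) ^ 2 := by
    have hs : (Real.sqrt (κ ^ 2 + τ ^ 2) : ℂ) ^ 2 = κ ^ 2 + τ ^ 2 := by
      exact_mod_cast Real.sq_sqrt (by positivity)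
    rw [hξ', dotProduct_of_orthonormal hd hdp horth]
    linear_combination (-1 : ℂ) * hs + (Real.sqrt (κ ^ 2 + τ ^ 2) : ℂ) ^ 2 * Complex.I_sq
  have hηξ : η ⬝ᵥ ξ = 0 := by
    have hr : (τ : ℂ) * Real.sqrt (1 + κ ^ 2 / τ ^ 2) = Real.sqrt (κ ^ 2 + τ ^ 2) := by
      exact_mod_cast mul_sqrt_one_add_div_sq hτpos
    rw [hξ', hη', dotProduct_of_orthonormal hd hdp horth]
    linear_combination (-Complex.I) * hr
  have hmuκ : (mu : ℂ) * (κ : ℂ) ^ 2 = (ω : ℂ) ^ 2 := by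
    have : mu * κ ^ 2 = ω ^ 2 := by
      simp only [κ, div_pow, Real.sq_sqrt hmu.le]
      field_simp
    exact_mod_cast this
  intro x i
  rw [lame_of_planeWave lam mu ξ η u₀ hu₀, hξξ, hηξ, hu₀]
  linear_combination (-η i * Complex.exp (∑ j, ξ j * (x j : ℂ))) * hmuκ

/-- Lemma `lem:cgo`: the complex geometric optics function
`u₀(x) = η e^{ξ·x}`, with `ξ = τd + i√(κ_s²+τ²) d⊥` and `η = −i√(1+κ_s²/τ²) d + d⊥`,
satisfies `ℒu₀ + ω²u₀ = 0` everywhere. -/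
theorem cgo_solution_lame
    (n : ℕ) (hn : n = 2 ∨ n = 3) (ω lam mu τ : ℝ)
    (hω : 0 < ω) (hmu : 0 < mu)
    (d dp : Euc n) (hd : ‖d‖ = 1) (hdp : ‖dp‖ = 1)
    (horth : (inner ℝ d dp : ℝ) = 0)
    (hτ : ω / Real.sqrt mu < τ)
    (ξ η : Fin n → ℂ)
    (hξ : ∀ j, ξ j = (τ : ℂ) * (d j : ℂ) +
        Complex.I * (Real.sqrt ((ω / Real.sqrt mu) ^ 2 + τ ^ 2) : ℂ) * (dp j : ℂ))
    (hη : ∀ j, η j = -Complex.I * (Real.sqrt (1 + (ω / Real.sqrt mu) ^ 2 / τ ^ 2) : ℂ) *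
        (d j : ℂ) + (dp j : ℂ))
    (u₀ : Euc n → EucC n)
    (hu₀ : ∀ x i, u₀ x i = η i * Complex.exp (∑ j, ξ j * (x j : ℂ))) :
    ∀ x i, lame lam mu u₀ x i + (ω : ℂ) ^ 2 * u₀ x i = 0 :=
  cgo_solution_lame_general n ω lam mu τ hω hmu d dp hd hdp horth hτ ξ η hξ hη u₀ hu₀
end
end

section
/- For each n ∈ {2,3} and each α > 0 there is a constant C_{n,α} > 0 such that for all K > 0, b > 0 and τ > 0, ∫_{{x = (x′,xₙ) ∈ ℝⁿ : K|x′|² < xₙ < b}} e^{−τ xₙ} |x|^α dx ≤ C_{n,α} · (b + K^{−1})^{α/2} · b^{(n+α+1)/2} · K^{−(n−1)/2}. -/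
/-! On the region `K|x′|² < xₙ < b` we have `0 < xₙ < b` and `|x′|² < b/K`, so the integrand is
at most `(b (b + K⁻¹))^{α/2}` and the region lies in a box of volume `(2√(b/K))^{n-1} b`.
Their product is the claimed bound with `C = 2^{n-1}`. -/

open scoped BigOperators NNReal ENNReal
open MeasureTheory Metric Set

noncomputable section

def truncParaboloid {n : ℕ} [NeZero n] (K b : ℝ) : Set (Euc n) :=
  {x | K * sqnorm' x < x (lastC n) ∧ x (lastC n) < b}

theorem EuclideanSpace.volume_le_prod_of_forall_mem_Ioo {ι : Type*} [Fintype ι]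
    {S : Set (EuclideanSpace ℝ ι)} (a c : ι → ℝ) (h : ∀ x ∈ S, ∀ i, x i ∈ Ioo (a i) (c i)) :
    volume S ≤ ∏ i, ENNReal.ofReal (c i - a i) := by
  have hbox : MeasurableSet (univ.pi fun i => Ioo (a i) (c i)) :=
    MeasurableSet.univ_pi fun _ => measurableSet_Ioo
  calc volume S ≤ volume (WithLp.ofLp ⁻¹' univ.pi fun i => Ioo (a i) (c i)) :=
        measure_mono fun x hx i _ => h x hx i
    _ = ∏ i, ENNReal.ofReal (c i - a i) := by
        rw [(PiLp.volume_preserving_ofLp ι).measure_preimage hbox.nullMeasurableSet,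
          volume_pi_pi]
        simp only [Real.volume_Ioo]

theorem Real.sqrt_div_pow {b K : ℝ} (hb : 0 ≤ b) (hK : 0 ≤ K) (m : ℕ) :
    √(b / K) ^ m = b ^ ((m : ℝ) / 2) * K ^ (-((m : ℝ) / 2)) := by
  rw [Real.sqrt_eq_rpow, ← Real.rpow_mul_natCast (div_nonneg hb hK), Real.div_rpow hb hK,
    Real.rpow_neg hK, div_eq_mul_inv]
  ring_nf

section
variable {n : ℕ} [NeZero n]

theorem sq_le_sqnorm' (x : Euc n) {j : Fin n} (hj : j ≠ lastC n) : x j ^ 2 ≤ sqnorm' x :=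
  Finset.single_le_sum (f := fun i => x i ^ 2) (fun _ _ => sq_nonneg _)
    (Finset.mem_erase.2 ⟨hj, Finset.mem_univ j⟩)

theorem sqnorm'_nonneg (x : Euc n) : 0 ≤ sqnorm' x :=
  Finset.sum_nonneg fun _ _ => sq_nonneg _

theorem norm_sq_eq_sqnorm'_add (x : Euc n) : ‖x‖ ^ 2 = sqnorm' x + x (lastC n) ^ 2 := by
  rw [EuclideanSpace.real_norm_sq_eq, sqnorm', Finset.sum_erase_add _ _ (Finset.mem_univ _)]

variable {K b : ℝ} {x : Euc n}

theorem lastC_pos_of_mem_truncParaboloid (hK : 0 < K) (hx : x ∈ truncParaboloid K b) :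
    0 < x (lastC n) :=
  (mul_nonneg hK.le (sqnorm'_nonneg x)).trans_lt hx.1

theorem sqnorm'_lt_of_mem_truncParaboloid (hK : 0 < K) (hx : x ∈ truncParaboloid K b) :
    sqnorm' x < b / K := by
  rw [lt_div_iff₀ hK, mul_comm]
  exact hx.1.trans hx.2

theorem norm_sq_le_of_mem_truncParaboloid (hK : 0 < K) (hx : x ∈ truncParaboloid K b) :
    ‖x‖ ^ 2 ≤ b * (b + K⁻¹) := by
  have hlast := lastC_pos_of_mem_truncParaboloid hK hx
  have hsq : x (lastC n) ^ 2 ≤ b * b := by nlinarith [hx.2]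
  rw [norm_sq_eq_sqnorm'_add, mul_add, ← div_eq_mul_inv]
  linarith [sqnorm'_lt_of_mem_truncParaboloid hK hx]

theorem volume_truncParaboloid_le (hK : 0 < K) (hb : 0 < b) :
    volume (truncParaboloid (n := n) K b) ≤
      ENNReal.ofReal ((2 * √(b / K)) ^ (n - 1) * b) := by
  set r := √(b / K)
  let a : Fin n → ℝ := fun i => if i = lastC n then 0 else -r
  let c : Fin n → ℝ := fun i => if i = lastC n then b else r
  have hbox : ∀ x ∈ truncParaboloid K b, ∀ i, x i ∈ Ioo (a i) (c i) := by
    intro x hx i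
    by_cases hi : i = lastC n
    · subst hi
      simpa [a, c] using ⟨lastC_pos_of_mem_truncParaboloid hK hx, hx.2⟩
    · have : x i ^ 2 < r ^ 2 := by
        rw [Real.sq_sqrt (div_pos hb hK).le]
        exact (sq_le_sqnorm' x hi).trans_lt (sqnorm'_lt_of_mem_truncParaboloid hK hx)
      simpa [a, c, hi, ← abs_lt] using abs_lt_of_sq_lt_sq this (Real.sqrt_nonneg _)
  refine (EuclideanSpace.volume_le_prod_of_forall_mem_Ioo a c hbox).trans_eq ?_
  have hsides : ∀ i ∈ Finset.univ.erase (lastC n),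
      ENNReal.ofReal (c i - a i) = ENNReal.ofReal (2 * r) := by
    intro i hi
    simp only [a, c, if_neg (Finset.ne_of_mem_erase hi)]
    ring_nf
  have hlast : c (lastC n) - a (lastC n) = b := by simp [a, c]
  rw [← Finset.mul_prod_erase _ _ (Finset.mem_univ (lastC n)), Finset.prod_congr rfl hsides,
    Finset.prod_const, Finset.card_erase_of_mem (Finset.mem_univ _), Finset.card_univ,
    Fintype.card_fin, hlast, ← ENNReal.ofReal_pow (by positivity),
    ← ENNReal.ofReal_mul hb.le, mul_comm]

theorem weight_le_of_mem_truncParaboloid {α τ : ℝ} (hα : 0 ≤ α) (hτ : 0 ≤ τ) (hK : 0 < K)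
    (hx : x ∈ truncParaboloid K b) :
    Real.exp (-τ * x (lastC n)) * ‖x‖ ^ α ≤ (b * (b + K⁻¹)) ^ (α / 2) := by
  have hexp : Real.exp (-τ * x (lastC n)) ≤ 1 := by
    rw [Real.exp_le_one_iff, neg_mul, neg_nonpos]
    exact mul_nonneg hτ (lastC_pos_of_mem_truncParaboloid hK hx).le
  calc Real.exp (-τ * x (lastC n)) * ‖x‖ ^ α ≤ ‖x‖ ^ α :=
        mul_le_of_le_one_left (by positivity) hexp
    _ = (‖x‖ ^ 2) ^ (α / 2) := by
        rw [← Real.rpow_natCast, ← Real.rpow_mul (norm_nonneg x)]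
        ring_nf
    _ ≤ (b * (b + K⁻¹)) ^ (α / 2) :=
        Real.rpow_le_rpow (by positivity) (norm_sq_le_of_mem_truncParaboloid hK hx) (by positivity)

theorem setIntegral_truncParaboloid_le_mul_volume {α τ : ℝ} (hα : 0 ≤ α) (hτ : 0 ≤ τ)
    (hK : 0 < K) (hb : 0 < b) :
    ∫ x in truncParaboloid K b, Real.exp (-τ * x (lastC n)) * ‖x‖ ^ α ≤
      (b * (b + K⁻¹)) ^ (α / 2) * ((2 * √(b / K)) ^ (n - 1) * b) := by
  have hvol := volume_truncParaboloid_le (n := n) hK hb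
  have hnorm : ∀ x ∈ truncParaboloid K b,
      ‖Real.exp (-τ * x (lastC n)) * ‖x‖ ^ α‖ ≤ (b * (b + K⁻¹)) ^ (α / 2) := fun x hx => by
    rw [Real.norm_of_nonneg (by positivity)]
    exact weight_le_of_mem_truncParaboloid hα hτ hK hx
  calc _ ≤ ‖∫ x in truncParaboloid K b, Real.exp (-τ * x (lastC n)) * ‖x‖ ^ α‖ := le_abs_self _
    _ ≤ (b * (b + K⁻¹)) ^ (α / 2) * volume.real (truncParaboloid (n := n) K b) :=
        norm_setIntegral_le_of_norm_le_const (hvol.trans_lt ENNReal.ofReal_lt_top) hnorm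
    _ ≤ _ := by
        gcongr
        exact ENNReal.toReal_le_of_le_ofReal (by positivity) hvol

theorem setIntegral_truncParaboloid_le {α τ : ℝ} (hα : 0 ≤ α) (hτ : 0 ≤ τ)
    (hK : 0 < K) (hb : 0 < b) :
    ∫ x in truncParaboloid K b, Real.exp (-τ * x (lastC n)) * ‖x‖ ^ α ≤
      2 ^ (n - 1) * (b + K⁻¹) ^ (α / 2) * b ^ (((n : ℝ) + α + 1) / 2) *
        K ^ (-(((n : ℝ) - 1) / 2)) := by
  refine (setIntegral_truncParaboloid_le_mul_volume hα hτ hK hb).trans_eq ?_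
  have hpow : b ^ (α / 2) * b ^ (((n : ℝ) - 1) / 2) * b = b ^ (((n : ℝ) + α + 1) / 2) := by
    rw [← Real.rpow_add hb, ← Real.rpow_add_one hb.ne']
    ring_nf
  rw [Real.mul_rpow hb.le (by positivity), mul_pow, Real.sqrt_div_pow hb.le hK.le,
    Nat.cast_sub NeZero.one_le, Nat.cast_one, ← hpow]
  ring

end

theorem truncated_paraboloid_weighted_integral_bound_general
    (n : ℕ) [NeZero n] (α : ℝ) (hα : 0 < α) :
    ∃ C : ℝ, 0 < C ∧
      ∀ K b τ : ℝ, 0 < K → 0 < b → 0 < τ →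
        (∫ x in {x : Euc n | K * sqnorm' x < x (lastC n) ∧ x (lastC n) < b},
            Real.exp (-τ * x (lastC n)) * ‖x‖ ^ α) ≤
          C * (b + K⁻¹) ^ (α / 2) * b ^ (((n : ℝ) + α + 1) / 2) *
            K ^ (-(((n : ℝ) - 1) / 2)) :=
  ⟨2 ^ (n - 1), by positivity, fun _ _ _ hK hb hτ =>
    setIntegral_truncParaboloid_le hα.le hτ.le hK hb⟩

/-- second estimate of Lemma `lem:estimate`:
`∫_{K|x′|²<xₙ<b} e^{−τxₙ}|x|^α dx ≤ C_{n,α} (b+K⁻¹)^{α/2} b^{(n+α+1)/2} K^{−(n−1)/2}`. -/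
theorem truncated_paraboloid_weighted_integral_bound
    (n : ℕ) [NeZero n] (hn : n = 2 ∨ n = 3) (α : ℝ) (hα : 0 < α) :
    ∃ C : ℝ, 0 < C ∧
      ∀ K b τ : ℝ, 0 < K → 0 < b → 0 < τ →
        (∫ x in {x : Euc n | K * sqnorm' x < x (lastC n) ∧ x (lastC n) < b},
            Real.exp (-τ * x (lastC n)) * ‖x‖ ^ α) ≤
          C * (b + K⁻¹) ^ (α / 2) * b ^ (((n : ℝ) + α + 1) / 2) *
            K ^ (-(((n : ℝ) - 1) / 2)) :=
  truncated_paraboloid_weighted_integral_bound_general n α hα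
end
end

section
/- Let n ∈ {2,3}, K > 0, and ξ = (ξ′, ξₙ) ∈ ℂⁿ with Re(ξₙ) < 0. Then the Lebesgue integral ∫_{{x = (x′,xₙ) ∈ ℝⁿ : xₙ > K|x′|²}} e^{ξ·x} dx converges and equals −(1/ξₙ) · ( π/(−ξₙ K) )^{(n−1)/2} · exp( − (ξ′·ξ′)/(4 ξₙ K) ), where ξ·x = Σⱼ ξⱼ xⱼ, ξ′·ξ′ = Σ_{j<n} ξⱼ², and the complex power is taken with the principal branch (which is well defined since Re(−ξₙ K) > 0). -/
open scoped BigOperators NNReal ENNReal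
open MeasureTheory Metric Set

noncomputable section

/-!
The shear `xₙ = s + K|x′|²` preserves Lebesgue measure and maps the half-space `{s > 0}` onto
the paraboloid `{xₙ > K|x′|²}`; in the coordinates `(s, x′)` the integrand factors as
`e^{ξₙ s} · e^{ξₙ K |x′|² + ξ′·x′}`. By Fubini the integral is `∫_{s>0} e^{ξₙ s} ds = -1/ξₙ`
times an `(n-1)`-dimensional complex Gaussian integral, which equals
`(π/(-ξₙK))^{(n-1)/2} e^{-ξ′·ξ′/(4ξₙK)}` because `Re(-ξₙK) > 0`.
-/

namespace MeasurableEquiv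

variable {G β : Type*} [AddGroup G] [MeasurableSpace G] [MeasurableAdd₂ G] [MeasurableSub₂ G]
  [MeasurableSpace β]

def shearAddFun {φ : β → G} (hφ : Measurable φ) : G × β ≃ᵐ G × β where
  toFun p := (p.1 + φ p.2, p.2)
  invFun p := (p.1 - φ p.2, p.2)
  left_inv p := by simp
  right_inv p := by simp
  measurable_toFun := (measurable_fst.add (hφ.comp measurable_snd)).prodMk measurable_snd
  measurable_invFun := (measurable_fst.sub (hφ.comp measurable_snd)).prodMk measurable_snd

theorem measurePreserving_shearAddFun (μ : Measure G) [μ.IsAddRightInvariant] [SFinite μ]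
    (ν : Measure β) [SFinite ν] {φ : β → G} (hφ : Measurable φ) :
    MeasurePreserving (shearAddFun hφ) (μ.prod ν) (μ.prod ν) :=
  (Measure.measurePreserving_swap.comp ((MeasurePreserving.id ν).skew_product
    (g := fun y s => s + φ y) (measurable_snd.add (hφ.comp measurable_fst))
    (ae_of_all _ fun y => map_add_right_eq_self μ (φ y)))).comp Measure.measurePreserving_swap

end MeasurableEquiv

theorem Fin.sum_univ_erase_last {M : Type*} [AddCommMonoid M] {m : ℕ} (g : Fin (m + 1) → M) :
    ∑ j ∈ Finset.univ.erase (Fin.last m), g j = ∑ j : Fin m, g j.castSucc := by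
  rw [← Finset.compl_singleton, ← Fin.image_castSucc,
    Finset.sum_image fun _ _ _ _ h => Fin.castSucc_injective m h]

theorem lastC_succ (m : ℕ) : lastC (m + 1) = Fin.last m := rfl

section Paraboloid

variable (K : ℝ) (m : ℕ)

def paraboloidCoords : ℝ × (Fin m → ℝ) ≃ᵐ Euc (m + 1) :=
  (MeasurableEquiv.shearAddFun (φ := fun y : Fin m → ℝ => K * ∑ j, y j ^ 2) (by fun_prop)).trans
    ((MeasurableEquiv.piFinSuccAbove (fun _ => ℝ) (Fin.last m)).symm.trans
      (MeasurableEquiv.toLp 2 _))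

theorem measurePreserving_paraboloidCoords :
    MeasurePreserving (paraboloidCoords K m) :=
  (PiLp.volume_preserving_toLp (Fin (m + 1))).comp
    ((volume_preserving_piFinSuccAbove (fun _ : Fin (m + 1) => ℝ) (Fin.last m)).symm.comp
      (MeasurableEquiv.measurePreserving_shearAddFun volume volume _))

variable {K m}

@[simp]
theorem paraboloidCoords_last (p : ℝ × (Fin m → ℝ)) :
    paraboloidCoords K m p (Fin.last m) = p.1 + K * ∑ j, p.2 j ^ 2 :=
  Fin.insertNth_apply_same (α := fun _ => ℝ) _ _ p.2

@[simp]
theorem paraboloidCoords_castSucc (p : ℝ × (Fin m → ℝ)) (j : Fin m) :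
    paraboloidCoords K m p j.castSucc = p.2 j := by
  rw [← Fin.succAbove_last_apply]
  exact Fin.insertNth_apply_succAbove (α := fun _ => ℝ) _ _ p.2 j

theorem sqnorm'_paraboloidCoords (p : ℝ × (Fin m → ℝ)) :
    sqnorm' (paraboloidCoords K m p) = ∑ j, p.2 j ^ 2 := by
  simp only [sqnorm', lastC_succ, Fin.sum_univ_erase_last, paraboloidCoords_castSucc]

theorem paraboloidCoords_preimage :
    paraboloidCoords K m ⁻¹' {x | K * sqnorm' x < x (Fin.last m)} = Ioi 0 ×ˢ univ := by
  ext p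
  simp [sqnorm'_paraboloidCoords]

theorem sum_mul_paraboloidCoords (ξ : Fin (m + 1) → ℂ) (p : ℝ × (Fin m → ℝ)) :
    ∑ j, ξ j * (paraboloidCoords K m p j : ℂ) = ξ (Fin.last m) * p.1 +
      (ξ (Fin.last m) * K * ∑ j, (p.2 j : ℂ) ^ 2 + ∑ j, ξ j.castSucc * p.2 j) := by
  simp only [Fin.sum_univ_castSucc, paraboloidCoords_castSucc, paraboloidCoords_last]
  push_cast
  ring

end Paraboloid

theorem integrableOn_and_setIntegral_cexp_paraboloid {m : ℕ} {K : ℝ} (hK : 0 < K)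
    {ξ : Fin (m + 1) → ℂ} (hξ : (ξ (Fin.last m)).re < 0) :
    IntegrableOn (fun x : Euc (m + 1) => Complex.exp (∑ j, ξ j * (x j : ℂ)))
        {x | K * sqnorm' x < x (Fin.last m)} ∧
      ∫ x in {x : Euc (m + 1) | K * sqnorm' x < x (Fin.last m)},
          Complex.exp (∑ j, ξ j * (x j : ℂ)) =
        -(1 / ξ (Fin.last m)) * ((Real.pi : ℂ) / (-ξ (Fin.last m) * K)) ^ ((m : ℂ) / 2) *
          Complex.exp (-(∑ j : Fin m, ξ j.castSucc ^ 2) / (4 * ξ (Fin.last m) * K)) := by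
  set b := ξ (Fin.last m)
  have hbK : 0 < (-(b * K)).re := by simpa using mul_neg_of_neg_of_pos hξ hK
  have hΦ := measurePreserving_paraboloidCoords K m
  have hΦemb := (paraboloidCoords K m).measurableEmbedding
  have hsplit (p : ℝ × (Fin m → ℝ)) :
      Complex.exp (∑ j, ξ j * (paraboloidCoords K m p j : ℂ)) = Complex.exp (b * p.1) *
        Complex.exp (-(-(b * K)) * ∑ j, (p.2 j : ℂ) ^ 2 + ∑ j, ξ j.castSucc * p.2 j) := by
    rw [sum_mul_paraboloidCoords, Complex.exp_add, neg_neg]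
  have hvol : (volume : Measure (ℝ × (Fin m → ℝ))).restrict (Ioi 0 ×ˢ univ) =
      (volume.restrict (Ioi 0)).prod volume := by
    rw [Measure.volume_eq_prod, Measure.restrict_prod_eq_prod_univ]
  constructor
  · rw [← hΦ.integrableOn_comp_preimage hΦemb, paraboloidCoords_preimage, Function.comp_def,
      IntegrableOn, hvol]
    simp only [hsplit]
    exact (integrableOn_exp_mul_complex_Ioi hξ 0).mul_prod
      (GaussianFourier.integrable_cexp_neg_mul_sum_add hbK _)
  · rw [← hΦ.setIntegral_preimage_emb hΦemb, paraboloidCoords_preimage, hvol]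
    simp only [hsplit]
    rw [integral_prod_mul (fun s : ℝ => Complex.exp (b * s)) fun y : Fin m → ℝ =>
        Complex.exp (-(-(b * K)) * ∑ j, (y j : ℂ) ^ 2 + ∑ j, ξ j.castSucc * y j),
      integral_exp_mul_complex_Ioi hξ 0,
      GaussianFourier.integral_cexp_neg_mul_sum_add hbK, Fintype.card_fin]
    rw [Complex.ofReal_zero, mul_zero, Complex.exp_zero, ← neg_mul,
      show ∀ z : ℂ, z / (4 * (-b * K)) = -z / (4 * b * K) from fun z => by ring]
    ring

theorem paraboloid_exponential_integral_eval_general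
    (n : ℕ) [NeZero n] (K : ℝ) (hK : 0 < K)
    (ξ : Fin n → ℂ) (hre : (ξ (lastC n)).re < 0) :
    MeasureTheory.IntegrableOn
        (fun x : Euc n => Complex.exp (∑ j, ξ j * (x j : ℂ)))
        {x : Euc n | K * sqnorm' x < x (lastC n)} ∧
      (∫ x in {x : Euc n | K * sqnorm' x < x (lastC n)},
          Complex.exp (∑ j, ξ j * (x j : ℂ))) =
        -(1 / ξ (lastC n)) *
          ((Real.pi : ℂ) / (-(ξ (lastC n)) * (K : ℂ))) ^ ((((n : ℕ) : ℂ) - 1) / 2) *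
          Complex.exp (-(∑ j ∈ Finset.univ.erase (lastC n), (ξ j) ^ 2) /
            (4 * ξ (lastC n) * (K : ℂ))) := by
  obtain ⟨m, rfl⟩ := Nat.exists_eq_succ_of_ne_zero (NeZero.ne n)
  rw [lastC_succ] at hre ⊢
  rw [Fin.sum_univ_erase_last, show ((m + 1 : ℕ) : ℂ) - 1 = m by push_cast; ring]
  exact integrableOn_and_setIntegral_cexp_paraboloid hK hre

/-- third identity of Lemma `lem:estimate`: for `Re ξₙ < 0`,
`∫_{xₙ>K|x′|²} e^{ξ·x} dx = −ξₙ⁻¹ (π/(−ξₙK))^{(n−1)/2} exp(−(ξ′·ξ′)/(4ξₙK))`,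
the complex power being the principal branch. -/
theorem paraboloid_exponential_integral_eval
    (n : ℕ) [NeZero n] (hn : n = 2 ∨ n = 3) (K : ℝ) (hK : 0 < K)
    (ξ : Fin n → ℂ) (hre : (ξ (lastC n)).re < 0) :
    MeasureTheory.IntegrableOn
        (fun x : Euc n => Complex.exp (∑ j, ξ j * (x j : ℂ)))
        {x : Euc n | K * sqnorm' x < x (lastC n)} ∧
      (∫ x in {x : Euc n | K * sqnorm' x < x (lastC n)},
          Complex.exp (∑ j, ξ j * (x j : ℂ))) =
        -(1 / ξ (lastC n)) *
          ((Real.pi : ℂ) / (-(ξ (lastC n)) * (K : ℂ))) ^ ((((n : ℕ) : ℂ) - 1) / 2) *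
          Complex.exp (-(∑ j ∈ Finset.univ.erase (lastC n), (ξ j) ^ 2) /
            (4 * ξ (lastC n) * (K : ℂ))) :=
  paraboloid_exponential_integral_eval_general n K hK ξ hre
end
end

section
/- Let n ∈ {2,3}, let 0 < K₋ ≤ K₊, and let b > 0, τ > 0. Then ∫_{{x = (x′,xₙ) ∈ ℝⁿ : K₋|x′|² < xₙ ≤ K₊|x′|² and xₙ < b}} e^{−τ xₙ} dx = ( σ(𝕊ⁿ⁻²)/(n−1) ) · ( K₋^{−(n−1)/2} − K₊^{−(n−1)/2} ) · τ^{−(n+1)/2} · γ(τb, (n+1)/2), where σ(𝕊ⁿ⁻²) is the total surface measure of the unit sphere in ℝⁿ⁻¹ (with σ(𝕊⁰) = 2 when n = 2), and γ(t,c) = ∫₀^t e^{−s} s^{c−1} ds is the lower incomplete gamma function. -/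
open scoped BigOperators NNReal ENNReal
open MeasureTheory Metric Set

noncomputable section

/-!
Slicing the region at height `xₙ = t ∈ (0, b)` leaves the annulus
`√(t / K₊) ≤ |x′| < √(t / K₋)`, whose volume is, by the scaling of Haar measure on balls,
`ω (K₋^{-d/2} - K₊^{-d/2}) t^{d/2}` with `d = n - 1` and `ω` the volume of the unit ball of `ℝᵈ`.
Fubini turns the integral into `ω (K₋^{-d/2} - K₊^{-d/2}) ∫₀ᵇ e^{-τt} t^{d/2} dt`, and `s = τt`
makes the last integral `τ^{-(d/2+1)} γ(τb, d/2+1)`. Finally `ω = 2 = σ(𝕊⁰)` for `d = 1` and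
`ω = π = σ(𝕊¹)/2` for `d = 2`.
-/

open Module Real

section Paraboloids

variable {E : Type*} [NormedAddCommGroup E]

def betweenParaboloids (Km Kp b : ℝ) : Set (ℝ × E) :=
  {z | Km * ‖z.2‖ ^ 2 < z.1 ∧ z.1 ≤ Kp * ‖z.2‖ ^ 2 ∧ z.1 < b}

lemma preimage_mk_betweenParaboloids_of_mem {Km Kp b t : ℝ} (hKm : 0 < Km) (hKmp : Km ≤ Kp)
    (ht : t ∈ Ioo 0 b) :
    Prod.mk t ⁻¹' betweenParaboloids (E := E) Km Kp b = ball 0 √(t / Km) \ ball 0 √(t / Kp) := by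
  ext w
  simp only [betweenParaboloids, mem_preimage, mem_ofPred_eq, mem_sdiff, mem_ball_zero_iff, not_lt,
    Real.lt_sqrt (norm_nonneg w), lt_div_iff₀ hKm, div_le_iff₀ (hKm.trans_le hKmp), ht.2, and_true]
  constructor <;> rintro ⟨h₁, h₂⟩ <;> constructor <;> linarith

lemma preimage_mk_betweenParaboloids_of_notMem {Km Kp b t : ℝ} (hKm : 0 ≤ Km)
    (ht : t ∉ Ioo 0 b) :
    Prod.mk t ⁻¹' betweenParaboloids (E := E) Km Kp b = ∅ := by
  refine eq_empty_of_forall_notMem fun w hw => ht ⟨?_, hw.2.2⟩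
  exact (mul_nonneg hKm (sq_nonneg _)).trans_lt hw.1

lemma betweenParaboloids_subset {Km Kp b : ℝ} (hKm : 0 < Km) :
    betweenParaboloids (E := E) Km Kp b ⊆ Icc 0 b ×ˢ closedBall 0 √(b / Km) := by
  rintro ⟨t, w⟩ ⟨hlt, -, htb⟩
  have ht : 0 < t := (mul_nonneg hKm.le (sq_nonneg _)).trans_lt hlt
  refine ⟨⟨ht.le, htb.le⟩, ?_⟩
  rw [mem_closedBall_zero_iff, Real.le_sqrt (norm_nonneg w) (div_nonneg (ht.trans htb).le hKm.le),
    le_div_iff₀ hKm]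
  linarith

variable [MeasurableSpace E] [BorelSpace E]

lemma measurableSet_betweenParaboloids (Km Kp b : ℝ) :
    MeasurableSet (betweenParaboloids (E := E) Km Kp b) := by
  unfold betweenParaboloids
  measurability

variable [NormedSpace ℝ E] [FiniteDimensional ℝ E] (μ : Measure E) [μ.IsAddHaarMeasure]

lemma integrableOn_betweenParaboloids {Km Kp b : ℝ} (hKm : 0 < Km) {g : ℝ → ℝ}
    (hg : ContinuousOn g (Icc 0 b)) :
    IntegrableOn (fun z : ℝ × E => g z.1) (betweenParaboloids Km Kp b) (volume.prod μ) :=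
  ((hg.comp continuousOn_fst fun _ hz => hz.1).integrableOn_compact
    (isCompact_Icc.prod (isCompact_closedBall 0 _))).mono_set (betweenParaboloids_subset hKm)

variable [Nontrivial E]

lemma addHaar_ball_sdiff_ball {r R : ℝ} (hr : 0 ≤ r) (hrR : r ≤ R) :
    μ (ball 0 R \ ball 0 r) =
      ENNReal.ofReal (R ^ finrank ℝ E - r ^ finrank ℝ E) * μ (ball 0 1) := by
  rw [measure_sdiff (ball_subset_ball hrR) measurableSet_ball.nullMeasurableSet
      measure_ball_lt_top.ne, μ.addHaar_ball _ (hr.trans hrR), μ.addHaar_ball _ hr,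
    ← ENNReal.sub_mul fun _ _ => measure_ball_lt_top.ne, ← ENNReal.ofReal_sub _ (by positivity)]

lemma measureReal_preimage_mk_betweenParaboloids {Km Kp b : ℝ} (hKm : 0 < Km) (hKmp : Km ≤ Kp)
    (t : ℝ) :
    μ.real (Prod.mk t ⁻¹' betweenParaboloids Km Kp b) = (Ioo 0 b).indicator
      (fun t => μ.real (ball 0 1) *
        (Km ^ (-(finrank ℝ E / 2 : ℝ)) - Kp ^ (-(finrank ℝ E / 2 : ℝ))) * t ^ (finrank ℝ E / 2 : ℝ))
      t := by
  by_cases ht : t ∈ Ioo 0 b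
  · have hr : √(t / Kp) ≤ √(t / Km) :=
      Real.sqrt_le_sqrt (div_le_div_of_nonneg_left ht.1.le hKm hKmp)
    have hsqrt (K : ℝ) (hK : 0 < K) :
        √(t / K) ^ finrank ℝ E = K ^ (-(finrank ℝ E / 2 : ℝ)) * t ^ (finrank ℝ E / 2 : ℝ) := by
      rw [Real.sqrt_eq_rpow, ← Real.rpow_natCast, ← Real.rpow_mul (div_nonneg ht.1.le hK.le),
        Real.div_rpow ht.1.le hK.le, Real.rpow_neg hK.le]
      ring_nf
    rw [indicator_of_mem ht, preimage_mk_betweenParaboloids_of_mem hKm hKmp ht, measureReal_def,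
      addHaar_ball_sdiff_ball μ (Real.sqrt_nonneg _) hr, ENNReal.toReal_mul, ENNReal.toReal_ofReal,
      hsqrt Km hKm, hsqrt Kp (hKm.trans_le hKmp), measureReal_def]
    · ring
    · exact sub_nonneg.2 (pow_le_pow_left₀ (Real.sqrt_nonneg _) hr _)
  · rw [indicator_of_notMem ht, preimage_mk_betweenParaboloids_of_notMem hKm.le ht,
      measureReal_empty]

theorem setIntegral_betweenParaboloids {Km Kp b : ℝ} (hKm : 0 < Km) (hKmp : Km ≤ Kp) (hb : 0 ≤ b)
    {g : ℝ → ℝ} (hg : ContinuousOn g (Icc 0 b)) :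
    ∫ z in betweenParaboloids Km Kp b, g z.1 ∂(volume.prod μ) =
      μ.real (ball 0 1) * (Km ^ (-(finrank ℝ E / 2 : ℝ)) - Kp ^ (-(finrank ℝ E / 2 : ℝ))) *
        ∫ t in 0..b, g t * t ^ (finrank ℝ E / 2 : ℝ) := by
  have hB := measurableSet_betweenParaboloids (E := E) Km Kp b
  rw [← integral_indicator hB, integral_prod _
    ((integrable_indicator_iff hB).2 (integrableOn_betweenParaboloids μ hKm hg))]
  have hslice (t : ℝ) : ∫ w, (betweenParaboloids Km Kp b).indicator (fun z => g z.1) (t, w) ∂μ =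
      μ.real (Prod.mk t ⁻¹' betweenParaboloids Km Kp b) * g t :=
    integral_indicator_const (g t) (measurable_prodMk_left hB)
  simp_rw [hslice, measureReal_preimage_mk_betweenParaboloids μ hKm hKmp, ← indicator_mul_left]
  rw [integral_indicator measurableSet_Ioo, ← integral_Ioc_eq_integral_Ioo,
    ← intervalIntegral.integral_of_le hb, ← intervalIntegral.integral_const_mul]
  congr 1 with t
  ring

end Paraboloids

lemma intervalIntegral_exp_neg_mul_mul_rpow {p b τ : ℝ} (hb : 0 ≤ b) (hτ : 0 < τ) :
    ∫ t in 0..b, exp (-τ * t) * t ^ p = τ ^ (-(p + 1)) * ∫ s in 0..τ * b, exp (-s) * s ^ p := by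
  have hscale : ∫ t in 0..b, exp (-(τ * t)) * (τ * t) ^ p =
      τ ^ p * ∫ t in 0..b, exp (-τ * t) * t ^ p := by
    rw [← intervalIntegral.integral_const_mul]
    refine intervalIntegral.integral_congr fun t ht => ?_
    rw [uIcc_of_le hb] at ht
    simp only [Real.mul_rpow hτ.le ht.1, neg_mul]
    ring
  have hsub := intervalIntegral.integral_comp_mul_left (a := 0) (b := b)
    (fun s => exp (-s) * s ^ p) hτ.ne'
  rw [mul_zero, smul_eq_mul, hscale, eq_inv_mul_iff_mul_eq₀ hτ.ne'] at hsub
  rw [← hsub, Real.rpow_neg hτ.le, Real.rpow_add hτ, Real.rpow_one]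
  field_simp

def splitLast (m : ℕ) : Euc (m + 1) ≃ᵐ ℝ × Euc m :=
  ((MeasurableEquiv.toLp 2 (Fin (m + 1) → ℝ)).symm.trans
    (MeasurableEquiv.piFinSuccAbove (fun _ => ℝ) (Fin.last m))).trans
    ((MeasurableEquiv.refl ℝ).prodCongr (MeasurableEquiv.toLp 2 (Fin m → ℝ)))

lemma splitLast_fst (m : ℕ) (x : Euc (m + 1)) : (splitLast m x).1 = x (lastC (m + 1)) := rfl

lemma norm_splitLast_snd_sq (m : ℕ) (x : Euc (m + 1)) : ‖(splitLast m x).2‖ ^ 2 = sqnorm' x := by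
  rw [EuclideanSpace.norm_sq_eq, sqnorm', show lastC (m + 1) = Fin.last m from rfl,
    Finset.sum_erase_eq_sub (Finset.mem_univ _), Fin.sum_univ_castSucc, add_sub_cancel_right]
  simp only [Real.norm_eq_abs, sq_abs, splitLast, MeasurableEquiv.trans_apply,
    MeasurableEquiv.piFinSuccAbove_apply, Fin.insertNthEquiv_last, Fin.snocEquiv_symm_apply]
  rfl

lemma measurePreserving_splitLast (m : ℕ) : MeasurePreserving (splitLast m) := by
  refine ((EuclideanSpace.volume_preserving_symm_measurableEquiv_toLp _).trans
    (volume_preserving_piFinSuccAbove (fun _ => ℝ) (Fin.last m))).trans ?_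
  rw [Measure.volume_eq_prod]
  exact (MeasurePreserving.id volume).prod (PiLp.volume_preserving_toLp (Fin m))

theorem setIntegral_exp_betweenParaboloids_euclidean (m : ℕ) [NeZero m] {Km Kp b τ : ℝ}
    (hKm : 0 < Km) (hKmp : Km ≤ Kp) (hb : 0 ≤ b) (hτ : 0 < τ) :
    ∫ x in {x : Euc (m + 1) | Km * sqnorm' x < x (lastC (m + 1)) ∧
        x (lastC (m + 1)) ≤ Kp * sqnorm' x ∧ x (lastC (m + 1)) < b},
        exp (-τ * x (lastC (m + 1))) =
      volume.real (ball (0 : Euc m) 1) * (Km ^ (-(m / 2 : ℝ)) - Kp ^ (-(m / 2 : ℝ))) *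
        τ ^ (-(m / 2 + 1 : ℝ)) * ∫ s in 0..τ * b, exp (-s) * s ^ (m / 2 : ℝ) := by
  have hset : {x : Euc (m + 1) | Km * sqnorm' x < x (lastC (m + 1)) ∧
      x (lastC (m + 1)) ≤ Kp * sqnorm' x ∧ x (lastC (m + 1)) < b} =
      splitLast m ⁻¹' betweenParaboloids Km Kp b := by
    ext x
    simp only [mem_preimage, betweenParaboloids, mem_ofPred_eq, splitLast_fst,
      norm_splitLast_snd_sq]
  calc _ = ∫ x in splitLast m ⁻¹' betweenParaboloids Km Kp b, exp (-τ * (splitLast m x).1) := by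
        rw [hset]; rfl
    _ = ∫ z in betweenParaboloids (E := Euc m) Km Kp b, exp (-τ * z.1) ∂(volume.prod volume) := by
        rw [← Measure.volume_eq_prod]
        exact (measurePreserving_splitLast m).setIntegral_preimage_emb
          (splitLast m).measurableEmbedding (fun z => exp (-τ * z.1)) _
    _ = _ := by
        rw [setIntegral_betweenParaboloids _ hKm hKmp hb (g := fun t => exp (-τ * t))
            (by fun_prop), finrank_euclideanSpace_fin, intervalIntegral_exp_neg_mul_mul_rpow hb hτ]
        ring_nf

/-- fourth identity of Lemma `lem:estimate`: the exponential integral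
between the paraboloids `xₙ = K₋|x′|²` and `xₙ = K₊|x′|²` below height `b` equals
`(σ(𝕊ⁿ⁻²)/(n−1)) (K₋^{−(n−1)/2} − K₊^{−(n−1)/2}) τ^{−(n+1)/2} γ(τb,(n+1)/2)`,
where `σ(𝕊⁰) = 2` and `σ(𝕊¹) = 2π`, and `γ` is the lower incomplete gamma function. -/
theorem between_paraboloids_integral_eval
    (n : ℕ) [NeZero n] (hn : n = 2 ∨ n = 3)
    (Km Kp b τ : ℝ) (hKm : 0 < Km) (hKmp : Km ≤ Kp) (hb : 0 < b) (hτ : 0 < τ) :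
    (∫ x in {x : Euc n | Km * sqnorm' x < x (lastC n) ∧
        x (lastC n) ≤ Kp * sqnorm' x ∧ x (lastC n) < b},
        Real.exp (-τ * x (lastC n))) =
      ((if n = 2 then (2 : ℝ) else 2 * Real.pi) / ((n : ℝ) - 1)) *
        (Km ^ (-(((n : ℝ) - 1) / 2)) - Kp ^ (-(((n : ℝ) - 1) / 2))) *
        τ ^ (-(((n : ℝ) + 1) / 2)) *
        ∫ s in (0 : ℝ)..(τ * b), Real.exp (-s) * s ^ (((n : ℝ) + 1) / 2 - 1) := by
  rcases hn with rfl | rfl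
  · have hball : volume.real (ball (0 : Euc 1) 1) = 2 := by
      simp [measureReal_def, InnerProductSpace.volume_ball_of_dim_odd (k := 0)]
    refine (setIntegral_exp_betweenParaboloids_euclidean 1 hKm hKmp hb.le hτ).trans ?_
    rw [hball]
    norm_num
  · have hball : volume.real (ball (0 : Euc 2) 1) = π := by
      simp [measureReal_def, pi_nonneg]
    refine (setIntegral_exp_betweenParaboloids_euclidean 2 hKm hKmp hb.le hτ).trans ?_
    rw [hball]
    norm_num
end
end

section
/- Let λ, μ ∈ ℝ with μ > 0 and λ + 2μ > 0. Let ρ > 0 and let γ : (−ρ, ρ) → ℝ be differentiable with γ(0) = 0 and γ′(0) = 0. Let u = (u₁, u₂) : U → ℂ² be continuously differentiable on an open neighborhood U ⊆ ℝ² of 0 containing all points (x₁, γ(x₁)) with |x₁| < ρ, and suppose u(x₁, γ(x₁)) = 0 for all |x₁| < ρ. If moreover μ (∂₂u₁(0) + ∂₁u₂(0)) = 0 and λ ∂₁u₁(0) + (λ + 2μ) ∂₂u₂(0) = 0 (i.e. the elastic traction T_ν u vanishes at the origin, where ν = (0,−1) is the outer unit normal there), then all first-order partial derivatives of u vanish at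 0, i.e. the total derivative Du(0) = 0. -/
open scoped BigOperators NNReal ENNReal
open MeasureTheory Metric Set

noncomputable section

/-!
Along the boundary curve `t ↦ (t, γ t)` the field vanishes identically, and since `γ'(0) = 0`
the curve passes through the origin with velocity `e₁`; the chain rule therefore kills the
tangential derivative `Du(0) e₁`. With `∂₁u = 0` the two traction equations reduce to
`μ ∂₂u₁ = 0` and `(λ + 2μ) ∂₂u₂ = 0`, so the normal derivative `Du(0) e₂` vanishes as well.
-/

open Filter Topology

theorem fderiv_apply_eq_zero_of_eventually_comp_eq_zero {E F : Type*}
    [NormedAddCommGroup E] [NormedSpace ℝ E] [NormedAddCommGroup F] [NormedSpace ℝ F]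
    {f : E → F} {c : ℝ → E} {v : E} {t : ℝ} (hf : DifferentiableAt ℝ f (c t))
    (hc : HasDerivAt c v t) (hfc : ∀ᶠ s in 𝓝 t, f (c s) = 0) :
    fderiv ℝ f (c t) v = 0 :=
  (hf.hasFDerivAt.comp_hasDerivAt t hc).unique ((hasDerivAt_const t 0).congr_of_eventuallyEq hfc)

theorem hasDerivAt_toEuc_graph {γ : ℝ → ℝ} {γ' t : ℝ} (hγ : HasDerivAt γ γ' t) :
    HasDerivAt (fun s => toEuc ![s, γ s]) (toEuc ![1, γ']) t := by
  have hpi : HasDerivAt (fun s => ![s, γ s]) ![1, γ'] t := by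
    rw [hasDerivAt_pi]
    intro i
    fin_cases i
    exacts [hasDerivAt_id t, hγ]
  exact (PiLp.hasFDerivAt_toLp 2 _).comp_hasDerivAt t hpi

theorem pd_eq_fderiv_apply {n m : ℕ} {u : Euc n → EucC m} {x : Euc n}
    (hu : DifferentiableAt ℝ u x) (j : Fin n) (i : Fin m) :
    pd j (fun z => u z i) x = fderiv ℝ u x (EuclideanSpace.single j 1) i := by
  have hui : HasFDerivAt (fun z => u z i)
      ((PiLp.proj 2 (fun _ => ℂ) i).restrictScalars ℝ ∘L fderiv ℝ u x) x :=
    ((PiLp.hasFDerivAt_apply (𝕜 := ℂ) 2 (u x) i).restrictScalars ℝ).comp x hu.hasFDerivAt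
  rw [pd, hui.fderiv]
  rfl

theorem ContinuousLinearMap.eq_zero_of_apply_single {ι F : Type*} [Fintype ι] [DecidableEq ι]
    [AddCommGroup F] [Module ℝ F] [TopologicalSpace F]
    (D : EuclideanSpace ℝ ι →L[ℝ] F) (h : ∀ j, D (EuclideanSpace.single j 1) = 0) : D = 0 :=
  ContinuousLinearMap.coe_injective <|
    (EuclideanSpace.basisFun ι ℝ).toBasis.ext fun j => by simpa using h j

theorem traction_and_boundary_vanishing_gradient_2d_general
    (lam mu ρ : ℝ) (hmu : 0 < mu) (hlm : 0 < lam + 2 * mu) (hρ : 0 < ρ)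
    (γ : ℝ → ℝ) (hγdiff : ∀ t : ℝ, |t| < ρ → DifferentiableAt ℝ γ t)
    (hγ0 : γ 0 = 0) (hγ'0 : deriv γ 0 = 0)
    (U : Set (Euc 2)) (hU : IsOpen U) (h0U : (0 : Euc 2) ∈ U)
    (u : Euc 2 → EucC 2) (hu : ContDiffOn ℝ 1 u U)
    (hvan : ∀ t : ℝ, |t| < ρ → u (toEuc ![t, γ t]) = 0)
    (htr1 : (mu : ℂ) * (pd 1 (fun z => u z 0) 0 + pd 0 (fun z => u z 1) 0) = 0)
    (htr2 : (lam : ℂ) * pd 0 (fun z => u z 0) 0 +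
        ((lam : ℂ) + 2 * (mu : ℂ)) * pd 1 (fun z => u z 1) 0 = 0) :
    fderiv ℝ u 0 = 0 := by
  have hud : DifferentiableAt ℝ u 0 :=
    (hu.differentiableOn one_ne_zero).differentiableAt (hU.mem_nhds h0U)
  have hγ : HasDerivAt γ 0 0 := by
    simpa [hγ'0] using (hγdiff 0 (by simpa using hρ)).hasDerivAt
  have hgraph0 : toEuc ![0, γ 0] = 0 := by
    ext i; fin_cases i <;> simp [toEuc, hγ0]
  have htangent : fderiv ℝ u 0 (EuclideanSpace.single 0 1) = 0 := by
    have hvel : toEuc ![1, 0] = EuclideanSpace.single (0 : Fin 2) (1 : ℝ) := by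
      ext i; fin_cases i <;> simp [toEuc]
    have hvan' : ∀ᶠ t in 𝓝 0, u (toEuc ![t, γ t]) = 0 := by
      filter_upwards [Metric.ball_mem_nhds (0 : ℝ) hρ] with t ht
      exact hvan t (by simpa using ht)
    have hcurve := fderiv_apply_eq_zero_of_eventually_comp_eq_zero (hgraph0 ▸ hud)
      (hasDerivAt_toEuc_graph hγ) hvan'
    rwa [hgraph0, hvel] at hcurve
  have hnormal : fderiv ℝ u 0 (EuclideanSpace.single 1 1) = 0 := by
    simp only [pd_eq_fderiv_apply hud, htangent, PiLp.zero_apply, add_zero, mul_zero,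
      zero_add, mul_eq_zero] at htr1 htr2
    have hmuC : (mu : ℂ) ≠ 0 := by exact_mod_cast hmu.ne'
    have hlmC : (lam : ℂ) + 2 * mu ≠ 0 := by exact_mod_cast hlm.ne'
    ext i
    fin_cases i
    exacts [htr1.resolve_left hmuC, htr2.resolve_left hlmC]
  exact ContinuousLinearMap.eq_zero_of_apply_single _ (Fin.forall_fin_two.2 ⟨htangent, hnormal⟩)

/-- 2-D case of Proposition `prop:ubeta`: if a `C¹` displacement field
vanishes along the boundary graph `{(x₁,γ(x₁))}` near the origin (where `γ(0)=0`,
`γ′(0)=0`) and its elastic traction vanishes at the origin, then `Du(0) = 0`. -/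
theorem traction_and_boundary_vanishing_gradient_2d
    (lam mu ρ : ℝ) (hmu : 0 < mu) (hlm : 0 < lam + 2 * mu) (hρ : 0 < ρ)
    (γ : ℝ → ℝ) (hγdiff : ∀ t : ℝ, |t| < ρ → DifferentiableAt ℝ γ t)
    (hγ0 : γ 0 = 0) (hγ'0 : deriv γ 0 = 0)
    (U : Set (Euc 2)) (hU : IsOpen U) (h0U : (0 : Euc 2) ∈ U)
    (u : Euc 2 → EucC 2) (hu : ContDiffOn ℝ 1 u U)
    (hgraph : ∀ t : ℝ, |t| < ρ → toEuc ![t, γ t] ∈ U)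
    (hvan : ∀ t : ℝ, |t| < ρ → u (toEuc ![t, γ t]) = 0)
    (htr1 : (mu : ℂ) * (pd 1 (fun z => u z 0) 0 + pd 0 (fun z => u z 1) 0) = 0)
    (htr2 : (lam : ℂ) * pd 0 (fun z => u z 0) 0 +
        ((lam : ℂ) + 2 * (mu : ℂ)) * pd 1 (fun z => u z 1) 0 = 0) :
    fderiv ℝ u 0 = 0 :=
  traction_and_boundary_vanishing_gradient_2d_general lam mu ρ hmu hlm hρ γ hγdiff hγ0 hγ'0 U hU h0U
    u hu hvan htr1 htr2
end
end
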